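/- Let G ∈ ℝ⟦X⟧ have constant coefficient 1 and nonzero coefficient of X; set f := G - 1 (a delta series), and let g ∈ ℝ⟦X⟧ have zero constant coefficient with f∘g = X and g∘f = X. Define S₁^Y(n,k) := c_n(g^k/k!), and for x ∈ ℝ define the probabilistic Euler polynomials E_n^Y(x) := c_n( 2·(G+1)^{-1}·( Exp∘( x·(L∘f) ) ) ) (the series G+1 has invertible constant coefficient 2, and L∘f is the formal logarithm of G). Let n ∈ ℕ, let q : ℝ → ℝ be a polynomial function of degree at most n, and let a_0, …, a_n ∈ ℝ satisfy q(x) = Σ_{r=0}^{n} a_r·E_r^Y(x) for all x ∈ ℝ. Then for each 0 ≤ r ≤ n: a_r = (1/2)·Σ_{j=r}^{n} S₁^Y(j,r)·(1/j!)·( (Δ^j q)(1) + (Δ^j q)(0) ) = (1/2)·Σ_{j=r}^{n} Σ_{i=0}^{j} (-1)^{j-i}·(1/j!)·binom(j,i)·S₁^Y(j,r)·( q(i+1) + q(i) ). -/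

import Mathlib

open PowerSeries Finset

noncomputable section

/-- `cN n F = n! * (coefficient of X^n in F)`. -/
def cN (n : ℕ) (F : PowerSeries ℝ) : ℝ := (n.factorial : ℝ) * PowerSeries.coeff (R := ℝ) n F

/-- Formal substitution `F ∘ G` (faithful when `G` has zero constant coefficient). -/
def pcomp (F G : PowerSeries ℝ) : PowerSeries ℝ :=
  PowerSeries.mk fun n =>
    ∑ k ∈ Finset.range (n + 1), (PowerSeries.coeff (R := ℝ) k F) * (PowerSeries.coeff (R := ℝ) n (G ^ k))

/-- The formal series of log(1+X). -/
def L : PowerSeries ℝ := PowerSeries.mk fun n => if n = 0 then 0 else (-1 : ℝ) ^ (n - 1) / n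

/-- Falling factorial `(y)_m`. -/
def ff (y : ℝ) (m : ℕ) : ℝ := ∏ i ∈ Finset.range m, (y - i)

/-- Rising factorial `⟨y⟩_m`. -/
def rf (y : ℝ) (m : ℕ) : ℝ := ∏ i ∈ Finset.range m, (y + i)

/-- Degenerate falling factorial `(x)_{n,λ}`. -/
def ffl (x : ℝ) (n : ℕ) (lam : ℝ) : ℝ := ∏ i ∈ Finset.range n, (x - i * lam)

/-- Stirling numbers of the second kind. -/
def S2 (n k : ℕ) : ℝ :=
  (k.factorial : ℝ)⁻¹ * ∑ j ∈ Finset.range (k + 1), (-1 : ℝ) ^ (k - j) * (k.choose j) * (j : ℝ) ^ n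

/-- The falling factorial polynomial `x(x-1)⋯(x-n+1)`. -/
def fallingPoly (n : ℕ) : Polynomial ℝ := ∏ i ∈ Finset.range n, (Polynomial.X - Polynomial.C (i : ℝ))

/-- (Signed) Stirling numbers of the first kind. -/
def S1 (n k : ℕ) : ℝ := (fallingPoly n).coeff k

/-- Degenerate Stirling numbers of the second kind. -/
def S2d (lam : ℝ) (n k : ℕ) : ℝ :=
  (k.factorial : ℝ)⁻¹ *
    ∑ j ∈ Finset.range (k + 1), (-1 : ℝ) ^ (k - j) * (k.choose j) * ffl (j : ℝ) n lam

/-- Formal degenerate exponential `e_λ`. -/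
def degExp (lam : ℝ) : PowerSeries ℝ := PowerSeries.mk fun n => ffl 1 n lam / n.factorial

/-- Formal degenerate logarithm `Λ_λ` of `1+X`. -/
def degLog (lam : ℝ) : PowerSeries ℝ :=
  lam⁻¹ • PowerSeries.mk fun n => if n = 0 then 0 else ff lam n / n.factorial

/-- Degenerate Stirling numbers of the first kind. -/
def S1d (lam : ℝ) (n k : ℕ) : ℝ := cN n ((k.factorial : ℝ)⁻¹ • (degLog lam) ^ k)

/-- Binomial series `(1+X)^c`. -/
def binser (c : ℝ) : PowerSeries ℝ := PowerSeries.mk fun n => ff c n / n.factorial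

/-- Frobenius–Euler numbers of order `j`. -/
def FE (u : ℝ) (j n : ℕ) : ℝ :=
  cN n (((1 - u) • (PowerSeries.exp ℝ - PowerSeries.C (R := ℝ) u)⁻¹) ^ j)

/-- Probabilistic Stirling numbers of the first kind associated with `g`. -/
def S1Y (g : PowerSeries ℝ) (n k : ℕ) : ℝ := cN n ((k.factorial : ℝ)⁻¹ • g ^ k)

/-- Probabilistic Euler polynomials: `E_n^Y(x) = c_n( 2·(G+1)⁻¹·Exp∘(x·(L∘(G-1))) )`. -/
def EY (G : PowerSeries ℝ) (n : ℕ) (x : ℝ) : ℝ :=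
  cN n (2 * (G + 1)⁻¹ * pcomp (PowerSeries.exp ℝ) (x • pcomp L (G - 1)))

/-- Forward difference operator. -/
def fwd (q : ℝ → ℝ) : ℝ → ℝ := fun x => q (x + 1) - q x

/-!
Write `f = G - 1`. The exponential generating function `Φ x = 2 (G + 1)⁻¹ (1 + f) ^ x` of the
`E_n^Y(x)` satisfies `Φ (x + 1) = Φ x * G`, so `Δ` acts on `q = ∑ a_s E_s^Y` by multiplying `Φ x`
by `f`; as `Φ 1 + Φ 0 = 2`, this gives `Δ^j q(1) + Δ^j q(0) = 2 ∑ a_s c_s(f^j)`. The `a_r` are then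
recovered from the orthogonality `∑_j S₁^Y(j, r) c_s(f^j / j!) = δ_{sr}`, the coefficient form of
`(g^r / r!) ∘ f = X^r / r!`. The identities for `(1 + X) ^ x = exp (x log (1 + X))` follow from the
uniqueness of solutions of `(1 + X) Y' = x Y`.
-/

namespace PowerSeries

variable {R : Type*} [CommRing R]

theorem coeff_pow_of_lt {f : R⟦X⟧} (hf : constantCoeff f = 0) {k n : ℕ} (h : n < k) :
    coeff n (f ^ k) = 0 :=
  coeff_of_lt_order n <|
    lt_of_lt_of_le (by exact_mod_cast h) (le_order_pow_of_constantCoeff_eq_zero k hf)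

theorem coeff_subst_eq_sum_range {f : R⟦X⟧} (hf : constantCoeff f = 0) (F : R⟦X⟧) {s n : ℕ}
    (hs : s ≤ n) : coeff s (F.subst f) = ∑ j ∈ range (n + 1), coeff j F * coeff s (f ^ j) := by
  rw [coeff_subst' (HasSubst.of_constantCoeff_zero' hf)]
  refine finsum_eq_sum_of_support_subset _ fun j hj => ?_
  simp only [Function.mem_support, smul_eq_mul] at hj
  rw [coe_range, Set.mem_Iio, Nat.lt_succ_iff]
  by_contra! hjn
  exact hj (by rw [coeff_pow_of_lt hf (by omega), mul_zero])

theorem constantCoeff_subst_eq {f : R⟦X⟧} (hf : constantCoeff f = 0) (F : R⟦X⟧) :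
    constantCoeff (F.subst f) = constantCoeff F := by
  rw [← coeff_zero_eq_constantCoeff_apply, ← coeff_zero_eq_constantCoeff_apply,
    coeff_subst_eq_sum_range hf F le_rfl]
  simp

theorem subst_one {f : R⟦X⟧} (hf : HasSubst f) : (1 : R⟦X⟧).subst f = 1 := by
  rw [← coe_substAlgHom hf, map_one]

section ODE

theorem coeff_X_mul_derivative (W : R⟦X⟧) (m : ℕ) :
    coeff m (X * d⁄dX R W) = m * coeff m W := by
  rcases m with _ | m
  · simp
  · rw [coeff_succ_X_mul, coeff_derivative, mul_comm]
    push_cast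
    ring

theorem eq_zero_of_one_add_X_mul_derivative [IsAddTorsionFree R] {c : R} {W : R⟦X⟧}
    (hW : (1 + X) * d⁄dX R W = c • W) (h0 : constantCoeff W = 0) : W = 0 := by
  ext m
  induction m with
  | zero => simpa using h0
  | succ m ih =>
    have hm := congrArg (coeff m) hW
    rw [add_mul, one_mul, map_add, coeff_derivative, coeff_X_mul_derivative, coeff_smul, ih] at hm
    simp only [mul_zero, add_zero, smul_zero, map_zero] at hm
    refine nsmul_right_injective (Nat.succ_ne_zero m) ?_
    simp only [map_zero, smul_zero, nsmul_eq_mul, Nat.cast_succ]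
    rw [mul_comm, hm]

theorem eq_of_one_add_X_mul_derivative [IsAddTorsionFree R] {c : R} {Y Z : R⟦X⟧}
    (hY : (1 + X) * d⁄dX R Y = c • Y) (hZ : (1 + X) * d⁄dX R Z = c • Z)
    (h0 : constantCoeff Y = constantCoeff Z) : Y = Z :=
  sub_eq_zero.mp <| eq_zero_of_one_add_X_mul_derivative
    (by rw [map_sub, mul_sub, hY, hZ, smul_sub]) (by rw [map_sub, h0, sub_self])

end ODE

section ExpSmulLog

variable [Algebra ℚ R]

theorem one_add_X_mul_derivative_log : (1 + X) * d⁄dX R (log R) = 1 := by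
  ext n
  rw [add_mul, one_mul, map_add, deriv_log]
  rcases n with _ | n
  · simp
  · simp [coeff_succ_X_mul, pow_succ]

/-- The series `(1 + X) ^ x`. -/
def expSmulLog (x : R) : R⟦X⟧ := (exp R).subst (x • log R)

theorem hasSubst_smul_log (x : R) : HasSubst (x • log R) :=
  HasSubst.of_constantCoeff_zero' (by simp)

theorem constantCoeff_expSmulLog (x : R) : constantCoeff (expSmulLog x) = 1 := by
  rw [expSmulLog, constantCoeff_subst_eq (by simp), constantCoeff_exp]

theorem one_add_X_mul_derivative_expSmulLog (x : R) :
    (1 + X) * d⁄dX R (expSmulLog x) = x • expSmulLog x := by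
  rw [expSmulLog, derivative_subst (hasSubst_smul_log x), derivative_exp, Derivation.map_smul,
    ← expSmulLog, smul_eq_C_mul, smul_eq_C_mul]
  linear_combination (C x * expSmulLog x) * one_add_X_mul_derivative_log (R := R)

theorem expSmulLog_zero : expSmulLog (0 : R) = 1 := by
  simp [expSmulLog, subst_zero_eq_C_constantCoeff]

variable [IsAddTorsionFree R]

theorem expSmulLog_one : expSmulLog (1 : R) = 1 + X :=
  eq_of_one_add_X_mul_derivative (one_add_X_mul_derivative_expSmulLog 1)
    (by simp) (by simp [constantCoeff_expSmulLog])

theorem expSmulLog_add_one (x : R) : expSmulLog (x + 1) = expSmulLog x * (1 + X) := by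
  refine eq_of_one_add_X_mul_derivative (one_add_X_mul_derivative_expSmulLog (x + 1)) ?_
    (by simp [constantCoeff_expSmulLog])
  have h := one_add_X_mul_derivative_expSmulLog x
  rw [smul_eq_C_mul] at h
  rw [Derivation.leibniz, smul_eq_mul, smul_eq_mul, map_add, derivative_X, derivative_one,
    smul_eq_C_mul, map_add, map_one]
  linear_combination (1 + X) * h

end ExpSmulLog

end PowerSeries

theorem pcomp_eq_subst {G : PowerSeries ℝ} (hG : constantCoeff G = 0) (F : PowerSeries ℝ) :
    pcomp F G = F.subst G := by
  ext s
  rw [coeff_subst_eq_sum_range hG F le_rfl, pcomp, coeff_mk]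

theorem L_eq_log : L = log ℝ := by
  ext n
  rcases n with _ | n
  · simp [L]
  · simp [L, pow_succ]

theorem pcomp_exp_smul_pcomp_L {f : PowerSeries ℝ} (hf : constantCoeff f = 0) (x : ℝ) :
    pcomp (exp ℝ) (x • pcomp L f) = (expSmulLog x).subst f := by
  have hsf : HasSubst f := HasSubst.of_constantCoeff_zero' hf
  have hLf : constantCoeff ((x • log ℝ).subst f) = 0 := by simp [constantCoeff_subst_eq hf]
  rw [L_eq_log, pcomp_eq_subst hf, ← subst_smul hsf, pcomp_eq_subst hLf, expSmulLog,
    subst_comp_subst_apply (hasSubst_smul_log x) hsf]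

theorem fwd_iterate_comp_of_map_add_one {R : Type*} [CommRing R] (ℓ : R →+ ℝ) {Φ : ℝ → R}
    {u : R} (hΦ : ∀ x, Φ (x + 1) = Φ x * u) (j : ℕ) (x : ℝ) :
    fwd^[j] (ℓ ∘ Φ) x = ℓ (Φ x * (u - 1) ^ j) := by
  induction j generalizing x with
  | zero => simp
  | succ j ih =>
    rw [Function.iterate_succ_apply', fwd, ih, ih, ← map_sub, hΦ, pow_succ]
    ring_nf

theorem fwd_iterate_one_add_fwd_iterate_zero (q : ℝ → ℝ) (j : ℕ) :
    fwd^[j] q 1 + fwd^[j] q 0 =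
      ∑ i ∈ range (j + 1), (-1 : ℝ) ^ (j - i) * j.choose i * (q (i + 1) + q i) := by
  change (fwdDiff 1)^[j] q 1 + (fwdDiff 1)^[j] q 0 = _
  simp only [fwdDiff_iter_eq_sum_shift, ← sum_add_distrib]
  refine sum_congr rfl fun i _ => ?_
  simp only [Int.cast_mul, Int.cast_pow, Int.cast_neg, Int.cast_one, Int.cast_natCast,
    zsmul_eq_mul, nsmul_eq_mul, mul_one, zero_add, add_comm (1 : ℝ)]
  ring

section EulerGF

variable {G : PowerSeries ℝ}

/-- The exponential generating function `2 (G + 1)⁻¹ G ^ x` of the `EY G n x`. -/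
def eulerGF (G : PowerSeries ℝ) (x : ℝ) : PowerSeries ℝ :=
  2 * (G + 1)⁻¹ * (expSmulLog x).subst (G - 1)

theorem constantCoeff_sub_one (hG : constantCoeff G = 1) : constantCoeff (G - 1) = 0 := by
  rw [map_sub, hG, map_one, sub_self]

theorem EY_eq_cN_eulerGF (hG : constantCoeff G = 1) (n : ℕ) (x : ℝ) :
    EY G n x = cN n (eulerGF G x) := by
  rw [EY, pcomp_exp_smul_pcomp_L (constantCoeff_sub_one hG), eulerGF]

theorem subst_sub_one_one_add_X (hG : constantCoeff G = 1) :
    (1 + X : PowerSeries ℝ).subst (G - 1) = G := by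
  have hsf := HasSubst.of_constantCoeff_zero' (constantCoeff_sub_one hG)
  rw [subst_add hsf, subst_one hsf, subst_X hsf]
  ring

theorem eulerGF_add_one (hG : constantCoeff G = 1) (x : ℝ) :
    eulerGF G (x + 1) = eulerGF G x * G := by
  rw [eulerGF, eulerGF, expSmulLog_add_one,
    subst_mul (HasSubst.of_constantCoeff_zero' (constantCoeff_sub_one hG)),
    subst_sub_one_one_add_X hG]
  ring

theorem eulerGF_one_add_eulerGF_zero (hG : constantCoeff G = 1) :
    eulerGF G 1 + eulerGF G 0 = 2 := by
  have hG1 : constantCoeff (G + 1) ≠ 0 := by norm_num [hG]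
  rw [eulerGF, eulerGF, expSmulLog_one, expSmulLog_zero, subst_sub_one_one_add_X hG,
    subst_one (HasSubst.of_constantCoeff_zero' (constantCoeff_sub_one hG))]
  linear_combination 2 * PowerSeries.inv_mul_cancel (G + 1) hG1

theorem fwd_iterate_one_add_fwd_iterate_zero_of_eq_sum_EY (hG : constantCoeff G = 1) {n : ℕ}
    {q : ℝ → ℝ} {a : ℕ → ℝ} (ha : ∀ x, q x = ∑ s ∈ range (n + 1), a s * EY G s x) (j : ℕ) :
    fwd^[j] q 1 + fwd^[j] q 0 = 2 * ∑ s ∈ range (n + 1), a s * cN s ((G - 1) ^ j) := by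
  let ℓ : PowerSeries ℝ →+ ℝ := AddMonoidHom.mk' (fun F => ∑ s ∈ range (n + 1), a s * cN s F)
    fun F F' => by simp only [cN, map_add, mul_add, sum_add_distrib]
  have hq : q = ℓ ∘ eulerGF G := funext fun x => by
    simp only [ha, EY_eq_cN_eulerGF hG]
    rfl
  rw [hq, fwd_iterate_comp_of_map_add_one ℓ (eulerGF_add_one hG),
    fwd_iterate_comp_of_map_add_one ℓ (eulerGF_add_one hG), ← map_add, ← add_mul,
    eulerGF_one_add_eulerGF_zero hG, two_mul, map_add, ← two_mul]
  rfl

end EulerGF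

theorem S1Y_mul_inv_factorial (g : PowerSeries ℝ) (j r : ℕ) :
    S1Y g j r * (j.factorial : ℝ)⁻¹ = coeff j ((r.factorial : ℝ)⁻¹ • g ^ r) := by
  rw [S1Y, cN, mul_comm, inv_mul_cancel_left₀ (by positivity)]

section Stirling

variable {f g : PowerSeries ℝ}

theorem sum_S1Y_mul_cN_pow (hf : constantCoeff f = 0) (hgf : g.subst f = X) (r : ℕ) {s n : ℕ}
    (hs : s ≤ n) :
    ∑ j ∈ Icc r n, S1Y g j r * (j.factorial : ℝ)⁻¹ * cN s (f ^ j) = if s = r then 1 else 0 := by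
  have hg : constantCoeff g = 0 := by
    rw [← constantCoeff_subst_eq hf, hgf, constantCoeff_X]
  have hlow : ∀ j < r, coeff j ((r.factorial : ℝ)⁻¹ • g ^ r) = 0 := fun j hj => by
    rw [coeff_smul, coeff_pow_of_lt hg hj, smul_zero]
  calc ∑ j ∈ Icc r n, S1Y g j r * (j.factorial : ℝ)⁻¹ * cN s (f ^ j)
      = s.factorial * ∑ j ∈ range (n + 1),
          coeff j ((r.factorial : ℝ)⁻¹ • g ^ r) * coeff s (f ^ j) := by
        rw [mul_sum]
        refine sum_subset (fun j hj => ?_) (fun j hj hjr => ?_) |>.trans (sum_congr rfl ?_)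
        · simp only [mem_Icc, mem_range] at hj ⊢; omega
        · simp only [mem_Icc, mem_range, not_and, not_le] at hj hjr
          rw [S1Y_mul_inv_factorial, hlow j (by omega), zero_mul]
        · intro j _
          rw [S1Y_mul_inv_factorial, cN]
          ring
    _ = s.factorial * coeff s ((r.factorial : ℝ)⁻¹ • X ^ r) := by
        rw [← coeff_subst_eq_sum_range hf _ hs, subst_smul (HasSubst.of_constantCoeff_zero' hf),
          subst_pow (HasSubst.of_constantCoeff_zero' hf), hgf]
    _ = if s = r then 1 else 0 := by
        rw [coeff_smul, coeff_X_pow]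
        split_ifs with hsr
        · subst hsr
          simp [mul_inv_cancel₀ (show (s.factorial : ℝ) ≠ 0 by positivity)]
        · simp

theorem sum_S1Y_mul_sum_cN_pow (hf : constantCoeff f = 0) (hgf : g.subst f = X) (a : ℕ → ℝ)
    {r n : ℕ} (hr : r ≤ n) :
    ∑ j ∈ Icc r n, S1Y g j r * (j.factorial : ℝ)⁻¹ *
      ∑ s ∈ range (n + 1), a s * cN s (f ^ j) = a r := by
  simp_rw [mul_sum, mul_left_comm _ (a _)]
  rw [sum_comm]
  simp_rw [← mul_sum]
  rw [sum_congr rfl fun s hs => by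
    rw [sum_S1Y_mul_cN_pow hf hgf r (Nat.lt_succ_iff.mp (mem_range.mp hs))]]
  simp [Nat.lt_succ_iff.mpr hr]

end Stirling

theorem stmt19_general (G g : PowerSeries ℝ)
    (hG0 : PowerSeries.coeff (R := ℝ) 0 G = 1)
    (hgf : pcomp g (G - 1) = PowerSeries.X)
    (n : ℕ) (q : ℝ → ℝ) (a : ℕ → ℝ)
    (ha : ∀ x : ℝ, q x = ∑ r ∈ Finset.range (n + 1), a r * EY G r x) :
    ∀ r : ℕ, r ≤ n →
      a r = (1 / 2) * ∑ j ∈ Finset.Icc r n,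
          S1Y g j r * (j.factorial : ℝ)⁻¹ * ((fwd^[j] q) 1 + (fwd^[j] q) 0) ∧
      a r = (1 / 2) * ∑ j ∈ Finset.Icc r n, ∑ i ∈ Finset.range (j + 1),
          (-1 : ℝ) ^ (j - i) * (j.factorial : ℝ)⁻¹ * (j.choose i : ℝ) * S1Y g j r *
            (q ((i : ℝ) + 1) + q i) := by
  intro r hr
  have hG : constantCoeff G = 1 := by rwa [← coeff_zero_eq_constantCoeff_apply]
  have hf := constantCoeff_sub_one hG
  have hgf' : g.subst (G - 1) = X := (pcomp_eq_subst hf g).symm.trans hgf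
  have part1 : a r = (1 / 2) * ∑ j ∈ Icc r n,
      S1Y g j r * (j.factorial : ℝ)⁻¹ * ((fwd^[j] q) 1 + (fwd^[j] q) 0) := by
    rw [← sum_S1Y_mul_sum_cN_pow hf hgf' a hr, mul_sum]
    refine sum_congr rfl fun j _ => ?_
    rw [fwd_iterate_one_add_fwd_iterate_zero_of_eq_sum_EY hG ha]
    ring
  refine ⟨part1, part1.trans (congrArg _ (sum_congr rfl fun j _ => ?_))⟩
  rw [fwd_iterate_one_add_fwd_iterate_zero, mul_sum]
  exact sum_congr rfl fun i _ => by ring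

theorem stmt19 (G g : PowerSeries ℝ)
    (hG0 : PowerSeries.coeff (R := ℝ) 0 G = 1) (hG1 : PowerSeries.coeff (R := ℝ) 1 G ≠ 0)
    (hg0 : PowerSeries.coeff (R := ℝ) 0 g = 0)
    (hfg : pcomp (G - 1) g = PowerSeries.X) (hgf : pcomp g (G - 1) = PowerSeries.X)
    (n : ℕ) (q : ℝ → ℝ) (Q : Polynomial ℝ) (hqQ : ∀ x, q x = Q.eval x)
    (hdeg : Q.natDegree ≤ n) (a : ℕ → ℝ)
    (ha : ∀ x : ℝ, q x = ∑ r ∈ Finset.range (n + 1), a r * EY G r x) :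
    ∀ r : ℕ, r ≤ n →
      a r = (1 / 2) * ∑ j ∈ Finset.Icc r n,
          S1Y g j r * (j.factorial : ℝ)⁻¹ * ((fwd^[j] q) 1 + (fwd^[j] q) 0) ∧
      a r = (1 / 2) * ∑ j ∈ Finset.Icc r n, ∑ i ∈ Finset.range (j + 1),
          (-1 : ℝ) ^ (j - i) * (j.factorial : ℝ)⁻¹ * (j.choose i : ℝ) * S1Y g j r *
            (q ((i : ℝ) + 1) + q i) :=
  stmt19_general G g hG0 hgf n q a ha
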